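/- arXiv:1603.09545 — 3 statements merged into one kernel-verified Lean document; each statement's English description precedes it below -/
import Mathlib

section
/- For every SETAF S over A, the preferred interpretations of S coincide with the preferred interpretations of its corresponding ADF: prf(S) = prf(D_S). -/
open Classical

/-- Three-valued interpretations over `A`:
`none` is **u**, `some true` is **t**, `some false` is **f**. -/
abbrev Interp (A : Type*) := A → Option Bool

/-- Two-valued interpretations over `A`. -/
abbrev Interp2 (A : Type*) := A → Bool

variable {A : Type*}

/-- The information order `≤ᵢ`, lifted pointwise to interpretations. -/
def leI (v w : Interp A) : Prop := ∀ a, v a = none ∨ v a = w a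

/-- The strict information order `<ᵢ`. -/
def ltI (v w : Interp A) : Prop := leI v w ∧ v ≠ w

/-- `w ∈ [v]₂`: the two-valued interpretation `w` extends `v`. -/
def ext2 (v : Interp A) (w : Interp2 A) : Prop := ∀ a, v a = none ∨ v a = some (w a)

/-- View a two-valued interpretation as a three-valued one. -/
def toI (w : Interp2 A) : Interp A := fun a => some (w a)

/-- `v` is two-valued. -/
def twoValued (v : Interp A) : Prop := ∀ a, v a ≠ none

/-- The operator `Γ_D` of the ADF with acceptance conditions `C`:
it maps `a` to the consensus `⊓ᵢ { C_a(w) | w ∈ [v]₂ }`. -/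
noncomputable def Gamma (C : A → Interp2 A → Bool) (v : Interp A) : Interp A :=
  fun a =>
    if ∀ w, ext2 v w → C a w = true then some true
    else if ∀ w, ext2 v w → C a w = false then some false
    else none

/-- `v` is admissible for the ADF `C`: `v ≤ᵢ Γ(v)`. -/
def admissible (C : A → Interp2 A → Bool) (v : Interp A) : Prop := leI v (Gamma C v)

/-- `v` is complete for the ADF `C`: `Γ(v) = v`. -/
def complete (C : A → Interp2 A → Bool) (v : Interp A) : Prop := Gamma C v = v

/-- `v` is preferred for the ADF `C`: `≤ᵢ`-maximal admissible. -/
def preferred (C : A → Interp2 A → Bool) (v : Interp A) : Prop :=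
  admissible C v ∧ ¬ ∃ w, admissible C w ∧ ltI v w

/-- `v` is a two-valued model of the ADF `C`. -/
def isModel (C : A → Interp2 A → Bool) (v : Interp A) : Prop :=
  twoValued v ∧ Gamma C v = v

/-- The `≤ᵢ`-maximal elements of a set of interpretations. -/
def maximals (W : Set (Interp A)) : Set (Interp A) :=
  {v ∈ W | ¬ ∃ w ∈ W, ltI v w}

/- SETAFs. A SETAF over `A` is a set `X` of pairs `(B, a)` of a (nonempty) set of
attackers `B ⊆ A` and an attacked statement `a ∈ A`. -/

/-- `a` is acceptable wrt `v` in the SETAF `X`. -/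
def acceptable (X : Set (Set A × A)) (v : Interp A) (a : A) : Prop :=
  ∀ B, (B, a) ∈ X → ∃ b ∈ B, v b = some false

/-- `a` is unacceptable wrt `v` in the SETAF `X`. -/
def unacceptable (X : Set (Set A × A)) (v : Interp A) (a : A) : Prop :=
  ∃ B, (B, a) ∈ X ∧ ∀ b ∈ B, v b = some true

/-- `v` is admissible for the SETAF `X`. -/
def admS (X : Set (Set A × A)) (v : Interp A) : Prop :=
  ∀ a, (v a = some true → acceptable X v a) ∧ (v a = some false → unacceptable X v a)

/-- `v` is complete for the SETAF `X`. -/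
def comS (X : Set (Set A × A)) (v : Interp A) : Prop :=
  ∀ a, (v a = some true ↔ acceptable X v a) ∧ (v a = some false ↔ unacceptable X v a)

/-- `v` is preferred for the SETAF `X`: `≤ᵢ`-maximal admissible. -/
def prfS (X : Set (Set A × A)) (v : Interp A) : Prop :=
  admS X v ∧ ¬ ∃ w, admS X w ∧ ltI v w

/-- `v` is a two-valued model of the SETAF `X`. -/
def modS (X : Set (Set A × A)) (v : Interp A) : Prop :=
  admS X v ∧ twoValued v

/-- The ADF `D_S` corresponding to the SETAF `X`:
`C_a(w) = t` iff every attack `(B, a) ∈ X` has some `b ∈ B` with `w(b) = f`. -/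
noncomputable def setafADF (X : Set (Set A × A)) : A → Interp2 A → Bool :=
  fun a w => if ∀ B, (B, a) ∈ X → ∃ b ∈ B, w b = false then true else false

/-- The ADF `D_(A,R)` associated to the AF with attack relation `R`. -/
noncomputable def afADF (R : Set (A × A)) : A → Interp2 A → Bool :=
  fun a w => if ∀ b, (b, a) ∈ R → w b = false then true else false

/-- `f` is an adm-characterization of `V`. -/
def admChar (f : Interp2 A → Interp2 A) (V : Set (Interp A)) : Prop :=
  ∀ v : Interp A, v ∈ V ↔ ∀ a, v a ≠ none → ∀ w, ext2 v w → some (f w a) = v a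

/-- `f` is a com-characterization of `V`. -/
def comChar (f : Interp2 A → Interp2 A) (V : Set (Interp A)) : Prop :=
  ∀ v : Interp A, v ∈ V ↔
    ((∀ a, v a ≠ none → ∀ w, ext2 v w → some (f w a) = v a) ∧
     (∀ a, v a = none →
        (∃ w, ext2 v w ∧ f w a = true) ∧ (∃ w, ext2 v w ∧ f w a = false)))

/-- `f` is a mod-characterization of `V`. -/
def modChar (f : Interp2 A → Interp2 A) (V : Set (Interp A)) : Prop :=
  (∀ v ∈ V, twoValued v) ∧ ∀ w : Interp2 A, (toI w ∈ V ↔ f w = w)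

/-- The function `f_D` of the ADF `D` with acceptance conditions `C`. -/
def charOf (C : A → Interp2 A → Bool) : Interp2 A → Interp2 A := fun w a => C a w

/-- The ADF `D_f` built from `f : V₂ → V₂`: `C_a(w) = t` iff `f(w)(a) = t`. -/
def adfOf (f : Interp2 A → Interp2 A) : A → Interp2 A → Bool := fun a w => f w a

/-- `b` is supporting for `a` in the ADF `C`. -/
def supporting [DecidableEq A] (C : A → Interp2 A → Bool) (b a : A) : Prop :=
  ∀ w : Interp2 A, w b = false → C a w = true → C a (Function.update w b true) = true

/-- `b` is attacking for `a` in the ADF `C`. -/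
def attacking [DecidableEq A] (C : A → Interp2 A → Bool) (b a : A) : Prop :=
  ∀ w : Interp2 A, w b = false → C a (Function.update w b true) = true → C a w = true

/-- The ADF `C` is bipolar. -/
def bipolar [DecidableEq A] (C : A → Interp2 A → Bool) : Prop :=
  ∀ a b, supporting C b a ∨ attacking C b a

lemma setafADF_true_iff (X : Set (Set A × A)) (a : A) (w : Interp2 A) :
    setafADF X a w = true ↔ ∀ B, (B, a) ∈ X → ∃ b ∈ B, w b = false := by
  simp [setafADF]

lemma setafADF_false_iff (X : Set (Set A × A)) (a : A) (w : Interp2 A) :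
    setafADF X a w = false ↔ ∃ B, (B, a) ∈ X ∧ ∀ b ∈ B, w b = true := by
  rw [← Bool.not_eq_true, setafADF_true_iff]
  push_neg
  simp

/-- The extension of `v` that sets `u` to `f`. -/
def wMin (v : Interp A) : Interp2 A := fun b => decide (v b = some true)

/-- The extension of `v` that sets `u` to `t`. -/
def wMax (v : Interp A) : Interp2 A := fun b => !decide (v b = some false)

lemma ext2_wMin (v : Interp A) : ext2 v (wMin v) := by
  intro b
  cases hv : v b with
  | none => exact Or.inl rfl
  | some c =>
    right
    cases c <;> simp [wMin, hv]

lemma ext2_wMax (v : Interp A) : ext2 v (wMax v) := by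
  intro b
  cases hv : v b with
  | none => exact Or.inl rfl
  | some c =>
    right
    cases c <;> simp [wMax, hv]

lemma alltrue_iff_acceptable (X : Set (Set A × A)) (v : Interp A) (a : A) :
    (∀ w, ext2 v w → setafADF X a w = true) ↔ acceptable X v a := by
  constructor
  · intro h B hB
    have := (setafADF_true_iff X a (wMax v)).mp (h _ (ext2_wMax v)) B hB
    obtain ⟨b, hb, hbf⟩ := this
    refine ⟨b, hb, ?_⟩
    by_contra hne
    simp [wMax, hne] at hbf
  · intro h w hw
    rw [setafADF_true_iff]
    intro B hB
    obtain ⟨b, hb, hbf⟩ := h B hB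
    refine ⟨b, hb, ?_⟩
    rcases hw b with h1 | h1
    · rw [h1] at hbf; exact absurd hbf (by simp)
    · rw [hbf] at h1; exact (Option.some_inj.mp h1).symm

lemma allfalse_iff_unacceptable (X : Set (Set A × A)) (v : Interp A) (a : A) :
    (∀ w, ext2 v w → setafADF X a w = false) ↔ unacceptable X v a := by
  constructor
  · intro h
    obtain ⟨B, hB, hall⟩ := (setafADF_false_iff X a (wMin v)).mp (h _ (ext2_wMin v))
    refine ⟨B, hB, fun b hb => ?_⟩
    have := hall b hb
    simpa [wMin] using this
  · rintro ⟨B, hB, hall⟩ w hw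
    rw [setafADF_false_iff]
    refine ⟨B, hB, fun b hb => ?_⟩
    rcases hw b with h1 | h1
    · rw [hall b hb] at h1; exact absurd h1 (by simp)
    · rw [hall b hb] at h1; exact (Option.some_inj.mp h1).symm

lemma not_both (X : Set (Set A × A)) (v : Interp A) (a : A)
    (h : ∀ w, ext2 v w → setafADF X a w = false) :
    ¬ ∀ w, ext2 v w → setafADF X a w = true := by
  intro h'
  have h1 := h _ (ext2_wMin v)
  have h2 := h' _ (ext2_wMin v)
  rw [h2] at h1; exact absurd h1 (by simp)

lemma setaf_adm_iff (X : Set (Set A × A)) (v : Interp A) :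
    admS X v ↔ admissible (setafADF X) v := by
  constructor
  · intro h a
    cases hv : v a with
    | none => exact Or.inl rfl
    | some c =>
      right
      cases c with
      | true =>
        have hacc : ∀ w, ext2 v w → setafADF X a w = true :=
          (alltrue_iff_acceptable X v a).mpr ((h a).1 hv)
        simp [Gamma, if_pos hacc]
      | false =>
        have hun : ∀ w, ext2 v w → setafADF X a w = false :=
          (allfalse_iff_unacceptable X v a).mpr ((h a).2 hv)
        simp [Gamma, if_neg (not_both X v a hun), if_pos hun]
  · intro h a
    constructor
    · intro hv
      rcases h a with h1 | h1
      · rw [hv] at h1; exact absurd h1 (by simp)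
      rw [hv] at h1
      apply (alltrue_iff_acceptable X v a).mp
      by_contra hne
      simp only [Gamma] at h1
      rw [if_neg hne] at h1
      by_cases h2 : ∀ w, ext2 v w → setafADF X a w = false
      · rw [if_pos h2] at h1; exact absurd h1.symm (by simp)
      · rw [if_neg h2] at h1; exact absurd h1.symm (by simp)
    · intro hv
      rcases h a with h1 | h1
      · rw [hv] at h1; exact absurd h1 (by simp)
      rw [hv] at h1
      apply (allfalse_iff_unacceptable X v a).mp
      by_contra hne
      simp only [Gamma] at h1
      by_cases h2 : ∀ w, ext2 v w → setafADF X a w = true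
      · rw [if_pos h2] at h1; exact absurd h1.symm (by simp)
      · rw [if_neg h2, if_neg hne] at h1; exact absurd h1.symm (by simp)

/-- For every SETAF `S` over `A`, `prf(S) = prf(D_S)`. -/
theorem setaf_prf_eq_adf (A : Type*) [Fintype A]
    (X : Set (Set A × A)) (hX : ∀ p ∈ X, p.1.Nonempty) :
    {v : Interp A | prfS X v} = {v : Interp A | preferred (setafADF X) v} := by
  ext v
  simp only [Set.mem_setOf_eq, prfS, preferred, setaf_adm_iff]
end

section
/- If f : V₂ → V₂ is a com-characterization of a set V of interpretations over A, then the ADF D_f satisfies com(D_f) = V. -/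
open Classical

variable {A : Type*}

lemma ext2_exists (v : Interp A) : ∃ w, ext2 v w := by
  refine ⟨fun a => (v a).getD true, fun a => ?_⟩
  cases h : v a with
  | none => exact Or.inl rfl
  | some b => exact Or.inr (by simp [h])

/-- If `f : V₂ → V₂` is a com-characterization of `V`,
then `com(D_f) = V`. -/
theorem comChar_realizes (A : Type*) [Fintype A]
    (f : Interp2 A → Interp2 A) (V : Set (Interp A)) (hf : comChar f V) :
    {v : Interp A | complete (adfOf f) v} = V := by
  ext v
  simp only [Set.mem_setOf_eq]
  rw [hf v]
  unfold complete Gamma adfOf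
  constructor
  · intro h
    constructor
    · intro a ha w hw
      have ha' := congrFun h a
      cases hv : v a with
      | none => exact absurd hv ha
      | some b =>
        rw [hv] at ha'
        cases b with
        | false =>
          by_cases h1 : ∀ w, ext2 v w → f w a = true
          · rw [if_pos h1] at ha'; cases ha'
          · by_cases h2 : ∀ w, ext2 v w → f w a = false
            · rw [h2 w hw]
            · rw [if_neg h1, if_neg h2] at ha'; cases ha'
        | true =>
          by_cases h1 : ∀ w, ext2 v w → f w a = true
          · rw [h1 w hw]
          · by_cases h2 : ∀ w, ext2 v w → f w a = false
            · rw [if_neg h1, if_pos h2] at ha'; cases ha'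
            · rw [if_neg h1, if_neg h2] at ha'; cases ha'
    · intro a ha
      have ha' := congrFun h a
      rw [ha] at ha'
      by_cases h1 : ∀ w, ext2 v w → f w a = true
      · rw [if_pos h1] at ha'; cases ha'
      · by_cases h2 : ∀ w, ext2 v w → f w a = false
        · rw [if_neg h1, if_pos h2] at ha'; cases ha'
        · push_neg at h1 h2
          obtain ⟨w1, hw1, hf1⟩ := h1
          obtain ⟨w2, hw2, hf2⟩ := h2
          exact ⟨⟨w2, hw2, by simpa using hf2⟩, ⟨w1, hw1, by simpa using hf1⟩⟩
  · rintro ⟨h1, h2⟩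
    funext a
    cases hv : v a with
    | none =>
      obtain ⟨⟨w1, hw1, hf1⟩, ⟨w2, hw2, hf2⟩⟩ := h2 a hv
      have n1 : ¬ ∀ w, ext2 v w → f w a = true := fun h => by
        have := h w2 hw2; rw [hf2] at this; exact Bool.false_ne_true this
      have n2 : ¬ ∀ w, ext2 v w → f w a = false := fun h => by
        have := h w1 hw1; rw [hf1] at this; exact Bool.true_eq_false_eq_False this
      rw [if_neg n1, if_neg n2]
    | some b =>
      have key : ∀ w, ext2 v w → f w a = b := fun w hw => by
        have := h1 a (by rw [hv]; simp) w hw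
        rw [hv] at this; exact Option.some_injective _ this
      cases b with
      | true => rw [if_pos key]
      | false =>
        obtain ⟨w0, hw0⟩ := ext2_exists v
        have n1 : ¬ ∀ w, ext2 v w → f w a = true := fun h => by
          have := h w0 hw0; rw [key w0 hw0] at this; exact Bool.false_ne_true this
        rw [if_neg n1, if_pos key]
end

section
/- Let A = {a,b} and let D be the ADF over A with acceptance conditions C_a(w) = w(a) and C_b(w) = t iff w(a) = w(b). Then adm(D) consists exactly of the five interpretations (a↦u,b↦u), (a↦t,b↦u), (a↦t,b↦t), (a↦t,b↦f), and (a↦f,b↦u); moreover, there is no bipolar ADF D' over A with adm(D') equal to this set. Hence the admissible-semantics signature of ADFs strictly exceeds that of BADFs. -/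
open Classical

variable {A : Type*}

lemma exists_ext2 (v : Interp A) : ∃ w : Interp2 A, ext2 v w := by
  refine ⟨fun a => (v a).getD true, fun a => ?_⟩
  cases h : v a with
  | none => exact Or.inl rfl
  | some b => exact Or.inr (by simp [h])

lemma admissible_iff (C : A → Interp2 A → Bool) (v : Interp A) :
    admissible C v ↔ ∀ a, v a = none ∨
      (v a = some true ∧ ∀ w, ext2 v w → C a w = true) ∨
      (v a = some false ∧ ∀ w, ext2 v w → C a w = false) := by
  obtain ⟨w0, hw0⟩ := exists_ext2 v
  unfold admissible leI Gamma
  apply forall_congr'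
  intro a
  by_cases h1 : ∀ w, ext2 v w → C a w = true
  · rw [if_pos h1]
    constructor
    · rintro (h | h)
      · exact Or.inl h
      · exact Or.inr (Or.inl ⟨h, h1⟩)
    · rintro (h | ⟨h, _⟩ | ⟨h, h2⟩)
      · exact Or.inl h
      · exact Or.inr h
      · exact absurd (h1 w0 hw0) (by simp [h2 w0 hw0])
  · rw [if_neg h1]
    by_cases h2 : ∀ w, ext2 v w → C a w = false
    · rw [if_pos h2]
      constructor
      · rintro (h | h)
        · exact Or.inl h
        · exact Or.inr (Or.inr ⟨h, h2⟩)
      · rintro (h | ⟨h, h1'⟩ | ⟨h, _⟩)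
        · exact Or.inl h
        · exact absurd (h2 w0 hw0) (by simp [h1' w0 hw0])
        · exact Or.inr h
    · rw [if_neg h2]
      constructor
      · rintro (h | h)
        · exact Or.inl h
        · exact Or.inl h
      · rintro (h | ⟨_, h1'⟩ | ⟨_, h2'⟩)
        · exact Or.inl h
        · exact absurd h1' h1
        · exact absurd h2' h2

/-- Over `A = {a,b}` (as `Fin 2`), the ADF with `C_a(w) = w(a)`
and `C_b(w) = t iff w(a) = w(b)` has exactly the five listed admissible
interpretations, and no bipolar ADF over `A` has this admissible semantics.
Hence the admissible-semantics signature of ADFs strictly exceeds that of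
BADFs. -/
theorem adf_strictly_more_expressive_than_badf_adm :
    {v : Interp (Fin 2) |
        admissible (fun a w => if a = 0 then w 0 else w 0 == w 1) v} =
      ({![none, none], ![some true, none], ![some true, some true],
        ![some true, some false], ![some false, none]} : Set (Interp (Fin 2))) ∧
    (¬ ∃ C' : Fin 2 → Interp2 (Fin 2) → Bool, bipolar C' ∧
        {v : Interp (Fin 2) | admissible C' v} =
          ({![none, none], ![some true, none], ![some true, some true],
            ![some true, some false], ![some false, none]} :
              Set (Interp (Fin 2)))) ∧
    ((∀ V : Set (Interp (Fin 2)),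
        (∃ C' : Fin 2 → Interp2 (Fin 2) → Bool, bipolar C' ∧
          {v : Interp (Fin 2) | admissible C' v} = V) →
        (∃ C'' : Fin 2 → Interp2 (Fin 2) → Bool,
          {v : Interp (Fin 2) | admissible C'' v} = V)) ∧
     (∃ V : Set (Interp (Fin 2)),
        (∃ C'' : Fin 2 → Interp2 (Fin 2) → Bool,
          {v : Interp (Fin 2) | admissible C'' v} = V) ∧
        ¬ ∃ C' : Fin 2 → Interp2 (Fin 2) → Bool, bipolar C' ∧
          {v : Interp (Fin 2) | admissible C' v} = V)) := by
  have h1 : {v : Interp (Fin 2) |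
        admissible (fun a w => if a = 0 then w 0 else w 0 == w 1) v} =
      ({![none, none], ![some true, none], ![some true, some true],
        ![some true, some false], ![some false, none]} : Set (Interp (Fin 2))) := by
    ext v
    simp only [Set.mem_setOf_eq, Set.mem_insert_iff, Set.mem_singleton_iff,
      admissible_iff, ext2]
    revert v
    decide
  have h2 : ¬ ∃ C' : Fin 2 → Interp2 (Fin 2) → Bool, bipolar C' ∧
      {v : Interp (Fin 2) | admissible C' v} =
        ({![none, none], ![some true, none], ![some true, some true],
          ![some true, some false], ![some false, none]} :
            Set (Interp (Fin 2))) := by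
    rintro ⟨C', hbip, hset⟩
    rw [Set.ext_iff] at hset
    simp only [Set.mem_setOf_eq, Set.mem_insert_iff, Set.mem_singleton_iff,
      admissible_iff, ext2] at hset
    -- C' 0 maps anything with w 0 = false to false
    have hF1 : ∀ w : Interp2 (Fin 2), w 0 = false → C' 0 w = false := by
      have h := (hset ![some false, none]).mpr (by decide)
      intro w hw
      rcases h 0 with h0 | ⟨h0, _⟩ | ⟨_, hQ⟩
      · simp at h0
      · simp at h0
      · refine hQ w (fun a => ?_)
        fin_cases a
        · exact Or.inr (by simp [hw])
        · exact Or.inl rfl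
    -- values of C' 1
    have hTT : C' 1 ![true, true] = true := by
      have h := (hset ![some true, some true]).mpr (by decide)
      rcases h 1 with h1 | ⟨_, hQ⟩ | ⟨h1, _⟩
      · simp at h1
      · exact hQ ![true, true] (by decide)
      · simp at h1
    have hTF : C' 1 ![true, false] = false := by
      have h := (hset ![some true, some false]).mpr (by decide)
      rcases h 1 with h1 | ⟨h1, _⟩ | ⟨_, hQ⟩
      · simp at h1
      · simp at h1
      · exact hQ ![true, false] (by decide)
    have hFT : C' 1 ![false, true] = false := by
      by_contra hc
      rw [Bool.not_eq_false] at hc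
      have hmem : _ := (hset ![some false, some true]).mp ?_
      · revert hmem; decide
      · intro a
        fin_cases a
        · refine Or.inr (Or.inr ⟨rfl, fun w hw => hF1 w ?_⟩)
          rcases hw 0 with h0 | h0
          · simp at h0
          · simp only [Matrix.cons_val_zero] at h0
            exact (Option.some_inj.mp h0).symm
        · refine Or.inr (Or.inl ⟨rfl, fun w hw => ?_⟩)
          have hw0 : w 0 = false := by
            rcases hw 0 with h0 | h0
            · simp at h0
            · simp only [Matrix.cons_val_zero] at h0
              exact (Option.some_inj.mp h0).symm
          have hw1 : w 1 = true := by
            rcases hw 1 with h0 | h0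
            · simp at h0
            · simp only [Matrix.cons_val_one, Matrix.head_cons] at h0
              exact (Option.some_inj.mp h0).symm
          have : w = ![false, true] := by
            funext i; fin_cases i
            · exact hw0
            · exact hw1
          rw [this]; exact hc
    have hFF : C' 1 ![false, false] = true := by
      by_contra hc
      rw [Bool.not_eq_true] at hc
      have hmem : _ := (hset ![some false, some false]).mp ?_
      · revert hmem; decide
      · intro a
        fin_cases a
        · refine Or.inr (Or.inr ⟨rfl, fun w hw => hF1 w ?_⟩)
          rcases hw 0 with h0 | h0
          · simp at h0
          · simp only [Matrix.cons_val_zero] at h0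
            exact (Option.some_inj.mp h0).symm
        · refine Or.inr (Or.inr ⟨rfl, fun w hw => ?_⟩)
          have hw0 : w 0 = false := by
            rcases hw 0 with h0 | h0
            · simp at h0
            · simp only [Matrix.cons_val_zero] at h0
              exact (Option.some_inj.mp h0).symm
          have hw1 : w 1 = false := by
            rcases hw 1 with h0 | h0
            · simp at h0
            · simp only [Matrix.cons_val_one, Matrix.head_cons] at h0
              exact (Option.some_inj.mp h0).symm
          have : w = ![false, false] := by
            funext i; fin_cases i
            · exact hw0
            · exact hw1
          rw [this]; exact hc
    have hup1 : Function.update ![false, false] (1 : Fin 2) true = ![false, true] := by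
      funext i; fin_cases i <;> simp [Function.update]
    have hup2 : Function.update ![true, false] (1 : Fin 2) true = ![true, true] := by
      funext i; fin_cases i <;> simp [Function.update]
    rcases hbip 1 1 with hs | ha
    · have := hs ![false, false] (by decide) hFF
      rw [hup1] at this
      rw [this] at hFT
      simp at hFT
    · have := ha ![true, false] (by decide) (by rw [hup2]; exact hTT)
      rw [this] at hTF
      simp at hTF
  exact ⟨h1, h2, fun V ⟨C', _, h⟩ => ⟨C', h⟩,
    ⟨_, ⟨_, h1⟩, h2⟩⟩
end
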